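/- arXiv:2103.03843 — 2 statements merged into one kernel-verified Lean document; each statement's English description precedes it below -/
import Mathlib

section
/- Let U ⊆ ℝ³ be an open set and let d : U → ℝ be a C² function satisfying the eikonal equation ‖∇d(x)‖ = 1 for all x ∈ U. Define n := ∇d and P := I − n nᵀ; for a C¹ vector field w : U → ℝ³ define the surface divergence div_Γ w := tr(P(Dw)P) and the scalar surface curl curl_Γ w := div_Γ(w × n). Let g : U → ℝ be C² and define the tangential gradient ∇_Γ g := P∇g. Then at every point of U: curl_Γ(∇_Γ g) = 0, i.e. the tangential gradient of any C² scalar field has vanishing scalar surface curl. -/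
noncomputable section
open Matrix

/-- `ℝ³` as a Euclidean space. -/
abbrev E3 := EuclideanSpace ℝ (Fin 3)

/-- View a point of `ℝ³` as a plain coordinate vector. -/
def toV (x : E3) : Fin 3 → ℝ := x

/-- View a plain coordinate vector as a point of `ℝ³`. -/
def ofV (v : Fin 3 → ℝ) : E3 := WithLp.toLp 2 v

/-- The Jacobian matrix `Du` of a vector field `u : ℝ³ → ℝ³` at `x`. -/
def jac (u : E3 → E3) (x : E3) : Matrix (Fin 3) (Fin 3) ℝ :=
  Matrix.of fun i j => toV (fderiv ℝ u x (EuclideanSpace.single j (1 : ℝ))) i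

/-- The unit normal field `n := ∇d` (as a coordinate vector). -/
def nV (d : E3 → ℝ) (x : E3) : Fin 3 → ℝ := toV (gradient d x)

/-- The orthogonal projection `P := I − n nᵀ` onto the tangent plane. -/
def Pmat (d : E3 → ℝ) (x : E3) : Matrix (Fin 3) (Fin 3) ℝ :=
  1 - vecMulVec (nV d x) (nV d x)

/-- The Weingarten map `H := ∇²d`, the Hessian of `d`. -/
def Hmat (d : E3 → ℝ) (x : E3) : Matrix (Fin 3) (Fin 3) ℝ :=
  jac (fun y => gradient d y) x

/-- The tangential (surface) gradient `∇_Γ g := P ∇g` of a scalar field. -/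
def gradG (d : E3 → ℝ) (g : E3 → ℝ) (x : E3) : Fin 3 → ℝ :=
  Pmat d x *ᵥ toV (gradient g x)

/-- The surface Jacobian `∇_Γ u := P (Du) P` of a vector field. -/
def jacG (d : E3 → ℝ) (u : E3 → E3) (x : E3) : Matrix (Fin 3) (Fin 3) ℝ :=
  Pmat d x * jac u x * Pmat d x

/-- The surface divergence `div_Γ u := tr(P (Du) P)` of a vector field. -/
def divG (d : E3 → ℝ) (u : E3 → E3) (x : E3) : ℝ := (jacG d u x).trace

/-- The surface rate-of-strain tensor `E_s(u) := ½(∇_Γ u + (∇_Γ u)ᵀ)`. -/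
def Es (d : E3 → ℝ) (u : E3 → E3) (x : E3) : Matrix (Fin 3) (Fin 3) ℝ :=
  (2⁻¹ : ℝ) • (jacG d u x + (jacG d u x)ᵀ)

/-- The scalar surface curl `curl_Γ u := div_Γ(u × n)` of a vector field. -/
def scurlG (d : E3 → ℝ) (u : E3 → E3) (x : E3) : ℝ :=
  divG d (fun y => ofV (crossProduct (toV (u y)) (nV d y))) x

/-- The vector surface curl `𝐜𝐮𝐫𝐥_Γ g := n × ∇_Γ g` of a scalar field. -/
def vcurlG (d : E3 → ℝ) (g : E3 → ℝ) (x : E3) : Fin 3 → ℝ :=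
  crossProduct (nV d x) (gradG d g x)

/-- The surface divergence of a matrix field, applied row-wise:
`div_Γ A := (div_Γ(e₁ᵀA), div_Γ(e₂ᵀA), div_Γ(e₃ᵀA))ᵀ`. -/
def divGmat (d : E3 → ℝ) (A : E3 → Matrix (Fin 3) (Fin 3) ℝ) (x : E3) : Fin 3 → ℝ :=
  fun i => divG d (fun y => ofV (fun j => A y i j)) x

/-!
Since `P∇g` and `∇g` differ by a multiple of `n`, the field `∇_Γ g × n` equals `∇g × n`, whose
Jacobian is `M = [∇g]ₓ ∇²d − [n]ₓ ∇²g` by the product rule, `[a]ₓ` being the matrix of `a × ·`.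
For any matrix `M`, `tr(PMP) = 0` as soon as `tr M = 0` and `n · Mn = 0`. Here `tr M = 0` since a
skew matrix times a symmetric one is traceless, and `Mn = −n × ∇²g n ⊥ n` since `∇²d n = 0`,
the derivative of the eikonal equation `‖∇d‖² = 1`.
-/

open Filter Topology

namespace Matrix

variable {ι R : Type*} [Fintype ι] [CommRing R]

theorem trace_mul_eq_zero_of_transpose_eq_neg [NoZeroDivisors R] [CharZero R]
    {S B : Matrix ι ι R} (hS : Sᵀ = -S) (hB : B.IsSymm) : (S * B).trace = 0 := by
  refine self_eq_neg.mp ?_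
  calc (S * B).trace = (S * B)ᵀ.trace := (trace_transpose _).symm
    _ = -(S * B).trace := by rw [transpose_mul, hS, hB, mul_neg, trace_neg, trace_mul_comm]

theorem trace_conj_one_sub_vecMulVec_eq_zero [DecidableEq ι] {v : ι → R} {M : Matrix ι ι R}
    (htr : M.trace = 0) (hv : v ⬝ᵥ (M *ᵥ v) = 0) :
    ((1 - vecMulVec v v) * M * (1 - vecMulVec v v)).trace = 0 := by
  have hv' : v ᵥ* M ⬝ᵥ v = 0 := by rwa [← dotProduct_mulVec]
  simp only [sub_mul, mul_sub, one_mul, mul_one, trace_sub, vecMulVec_mul, mul_vecMulVec,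
    trace_vecMulVec, vecMulVec_mulVec, htr]
  rw [dotProduct_comm v, dotProduct_comm (M *ᵥ v), hv, hv']
  simp

end Matrix

section CrossMatrix

variable {R : Type*} [CommRing R]

def crossMatrix (v : Fin 3 → R) : Matrix (Fin 3) (Fin 3) R :=
  !![0, -v 2, v 1; v 2, 0, -v 0; -v 1, v 0, 0]

theorem crossMatrix_mulVec (v w : Fin 3 → R) : crossMatrix v *ᵥ w = v ⨯₃ w := by
  ext i
  fin_cases i <;> simp [crossMatrix, cross_apply, mulVec, dotProduct, Fin.sum_univ_three] <;> ring

theorem crossMatrix_transpose (v : Fin 3 → R) : (crossMatrix v)ᵀ = -crossMatrix v := by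
  ext i j
  fin_cases i <;> fin_cases j <;> simp [crossMatrix]

theorem cross_one_sub_vecMulVec_mulVec (n v : Fin 3 → R) :
    ((1 - vecMulVec n n) *ᵥ v) ⨯₃ n = v ⨯₃ n := by
  simp [sub_mulVec, vecMulVec_mulVec, cross_self]

theorem trace_conj_crossMatrix_mul_sub_eq_zero [NoZeroDivisors R] [CharZero R]
    {n a : Fin 3 → R} {A B : Matrix (Fin 3) (Fin 3) R} (hA : A.IsSymm) (hB : B.IsSymm)
    (hAn : A *ᵥ n = 0) :
    ((1 - vecMulVec n n) * (crossMatrix a * A - crossMatrix n * B) * (1 - vecMulVec n n)).trace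
      = 0 := by
  apply trace_conj_one_sub_vecMulVec_eq_zero
  · rw [trace_sub, trace_mul_eq_zero_of_transpose_eq_neg (crossMatrix_transpose a) hA,
      trace_mul_eq_zero_of_transpose_eq_neg (crossMatrix_transpose n) hB, sub_zero]
  · rw [sub_mulVec, ← mulVec_mulVec, ← mulVec_mulVec, hAn, mulVec_zero, crossMatrix_mulVec,
      dotProduct_sub, dot_self_cross, dotProduct_zero, sub_zero]

end CrossMatrix

def crossProductCLM : (Fin 3 → ℝ) →L[ℝ] (Fin 3 → ℝ) →L[ℝ] (Fin 3 → ℝ) :=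
  LinearMap.toContinuousLinearMap (LinearMap.toContinuousLinearMap.toLinearMap ∘ₗ crossProduct)

theorem jac_apply_of_hasFDerivAt {u : E3 → E3} {u' : E3 →L[ℝ] E3} {x : E3}
    (h : HasFDerivAt u u' x) (i j : Fin 3) : jac u x i j = u' (EuclideanSpace.single j 1) i := by
  simp [jac, h.fderiv, toV]

theorem jac_cross {u v : E3 → E3} {x : E3} (hu : DifferentiableAt ℝ u x)
    (hv : DifferentiableAt ℝ v x) :
    jac (fun y => ofV (toV (u y) ⨯₃ toV (v y))) x
      = crossMatrix (toV (u x)) * jac v x - crossMatrix (toV (v x)) * jac u x := by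
  let e := EuclideanSpace.equiv (Fin 3) ℝ
  have h : HasFDerivAt (fun y => ofV (toV (u y) ⨯₃ toV (v y))) _ x :=
    e.symm.hasFDerivAt.comp x <| crossProductCLM.hasFDerivAt_of_bilinear
      (e.hasFDerivAt.comp x hu.hasFDerivAt) (e.hasFDerivAt.comp x hv.hasFDerivAt)
  ext i j
  rw [jac_apply_of_hasFDerivAt h]
  show _ = (crossMatrix _ *ᵥ fun k => jac v x k j) i - (crossMatrix _ *ᵥ fun k => jac u x k j) i
  simp only [crossMatrix_mulVec, crossProductCLM, jac, toV, ContinuousLinearMap.precompR_apply,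
    ContinuousLinearMap.precompL_apply, LinearMap.coe_toContinuousLinearMap', LinearMap.coe_comp,
    LinearEquiv.coe_coe, Function.comp_apply, ContinuousLinearMap.compL_apply,
    ContinuousLinearMap.comp_add, _root_.add_apply, ContinuousLinearMap.comp_apply,
    ContinuousLinearEquiv.coe_coe, PiLp.add_apply, of_apply]
  rw [sub_eq_add_neg, ← Pi.neg_apply, cross_anticomm]
  rfl

theorem toV_toDual_symm_apply (L : StrongDual ℝ E3) (i : Fin 3) :
    toV ((InnerProductSpace.toDual ℝ E3).symm L) i = L (EuclideanSpace.single i 1) := by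
  rw [← InnerProductSpace.toDual_symm_apply, EuclideanSpace.inner_single_right]
  simp [toV]

theorem Hmat_apply (f : E3 → ℝ) (x : E3) (i j : Fin 3) :
    Hmat f x i j
      = fderiv ℝ (fderiv ℝ f) x (EuclideanSpace.single j 1) (EuclideanSpace.single i 1) := by
  show toV (fderiv ℝ ((InnerProductSpace.toDual ℝ E3).symm ∘ fderiv ℝ f) x
    (EuclideanSpace.single j 1)) i = _
  rw [LinearIsometryEquiv.comp_fderiv]
  exact toV_toDual_symm_apply _ i

theorem Hmat_isSymm {f : E3 → ℝ} {x : E3} (hf : ContDiffAt ℝ 2 f x) : (Hmat f x).IsSymm := by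
  ext i j
  simp only [transpose_apply, Hmat_apply]
  exact hf.isSymmSndFDerivAt (by simp [minSmoothness_of_isRCLikeNormedField]) _ _

theorem differentiableAt_gradient {f : E3 → ℝ} {x : E3} (hf : ContDiffAt ℝ 2 f x) :
    DifferentiableAt ℝ (gradient f) x :=
  ((InnerProductSpace.toDual ℝ E3).symm.contDiff.contDiffAt.comp x
    (hf.fderiv_right (m := 1) (by norm_num))).differentiableAt (by norm_num)

theorem Hmat_mulVec_nV_eq_zero {d : E3 → ℝ} {x : E3} (hd : ContDiffAt ℝ 2 d x)
    (heik : ∀ᶠ y in 𝓝 x, ‖gradient d y‖ = 1) : Hmat d x *ᵥ nV d x = 0 := by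
  have hderiv := (differentiableAt_gradient hd).hasFDerivAt.norm_sq
  have hconst : HasFDerivAt (fun y => ‖gradient d y‖ ^ 2) (0 : E3 →L[ℝ] ℝ) x :=
    (hasFDerivAt_const 1 x).congr_of_eventuallyEq (heik.mono fun y hy => by simp [hy])
  rw [← Hmat_isSymm hd, mulVec_transpose]
  ext j
  have := congrArg (fun L : E3 →L[ℝ] ℝ => L (EuclideanSpace.single j 1)) (hderiv.unique hconst)
  simp only [_root_.smul_apply, ContinuousLinearMap.comp_apply, innerSL_apply_apply,
    _root_.zero_apply, PiLp.inner_apply] at this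
  simpa [vecMul, dotProduct, Hmat, jac, nV, toV, mul_comm] using this

/-- Let `U ⊆ ℝ³` be open and `d : U → ℝ` a `C²` function satisfying the eikonal equation
`‖∇d(x)‖ = 1` on `U`, with `n := ∇d` and `P := I − nnᵀ`.  For any `C²` scalar field
`g : U → ℝ`, the tangential gradient `∇_Γ g := P∇g` has vanishing scalar surface curl at
every point of `U`:  `curl_Γ(∇_Γ g) = 0`, where `curl_Γ w := div_Γ(w × n)`. -/
theorem stmt_9 (U : Set E3) (hU : IsOpen U) (d : E3 → ℝ)
    (hd : ContDiffOn ℝ 2 d U) (heik : ∀ x ∈ U, ‖gradient d x‖ = 1)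
    (g : E3 → ℝ) (hg : ContDiffOn ℝ 2 g U)
    (x : E3) (hx : x ∈ U) :
    scurlG d (fun y => ofV (gradG d g y)) x = 0 := by
  have hUx : U ∈ 𝓝 x := hU.mem_nhds hx
  have hdx : ContDiffAt ℝ 2 d x := hd.contDiffAt hUx
  have hgx : ContDiffAt ℝ 2 g x := hg.contDiffAt hUx
  have hfield : (fun y => ofV (toV (ofV (gradG d g y)) ⨯₃ nV d y))
      = fun y => ofV (toV (gradient g y) ⨯₃ toV (gradient d y)) := by
    funext y
    exact congrArg ofV (cross_one_sub_vecMulVec_mulVec _ _)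
  rw [scurlG, hfield, divG, jacG,
    jac_cross (differentiableAt_gradient hgx) (differentiableAt_gradient hdx)]
  exact trace_conj_crossMatrix_mul_sub_eq_zero (Hmat_isSymm hdx) (Hmat_isSymm hgx)
    (Hmat_mulVec_nV_eq_zero hdx (eventually_of_mem hUx heik))
end
end

section
/- Let U ⊆ ℝ³ be an open convex set and let d : U → ℝ be a C² function satisfying the eikonal equation ‖∇d(x)‖ = 1 for all x ∈ U. Let x ∈ U be such that π(x) := x − d(x)∇d(x) ∈ U. Then d(π(x)) = 0, ‖x − π(x)‖ = |d(x)|, and |d(x)| = dist(x, {y ∈ U : d(y) = 0}); that is, π(x) is a closest point to x on the zero level set of d within U and |d(x)| equals the distance from x to that zero level set. -/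
noncomputable section

/-!
Differentiating the eikonal equation `‖∇d‖² = 1` and using the symmetry of the Hessian gives
`D(∇d)(∇d) = 0`, so by a Grönwall argument `∇d` is constant on the segment from `x` to `π(x)`.
Hence `d` decreases along that segment with slope `‖∇d(x)‖² = 1` and vanishes at `π(x)`.
Conversely, `‖∇d‖ = 1` on the convex set `U` makes `d` 1-Lipschitz there, so no zero of `d` in `U`
is closer to `x` than `|d(x)|`.
-/

open Set Metric InnerProductSpace
open scoped RealInnerProductSpace Topology NNReal

section InnerProductSpace

variable {F : Type*} [NormedAddCommGroup F] [InnerProductSpace ℝ F] [CompleteSpace F]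
  {d : F → ℝ} {y : F}

theorem ContDiffAt.contDiffAt_gradient (hd : ContDiffAt ℝ 2 d y) :
    ContDiffAt ℝ 1 (gradient d) y :=
  (toDual ℝ F).symm.contDiff.contDiffAt.comp y (hd.fderiv_right (by norm_num))

theorem ContDiffAt.hasFDerivAt_gradient (hd : ContDiffAt ℝ 2 d y) :
    HasFDerivAt (gradient d) (fderiv ℝ (gradient d) y) y :=
  (hd.contDiffAt_gradient.differentiableAt one_ne_zero).hasFDerivAt

theorem ContDiffAt.inner_fderiv_gradient_apply (hd : ContDiffAt ℝ 2 d y) (u w : F) :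
    ⟪fderiv ℝ (gradient d) y u, w⟫ = fderiv ℝ (fderiv ℝ d) y u w := by
  have h : HasFDerivAt (fderiv ℝ d) (fderiv ℝ (fderiv ℝ d) y) y :=
    ((hd.fderiv_right (m := 1) (by norm_num)).differentiableAt one_ne_zero).hasFDerivAt
  have hgrad : gradient d = (toDual ℝ F).symm ∘ fderiv ℝ d := rfl
  rw [hgrad, ((toDual ℝ F).symm.hasFDerivAt.comp y h).fderiv]
  exact toDual_symm_apply

theorem ContDiffAt.inner_fderiv_gradient_comm (hd : ContDiffAt ℝ 2 d y) (u w : F) :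
    ⟪fderiv ℝ (gradient d) y u, w⟫ = ⟪fderiv ℝ (gradient d) y w, u⟫ := by
  rw [hd.inner_fderiv_gradient_apply, hd.inner_fderiv_gradient_apply,
    hd.isSymmSndFDerivAt (by simp)]

theorem ContDiffAt.fderiv_gradient_apply_gradient_eq_zero (hd : ContDiffAt ℝ 2 d y) {c : ℝ}
    (heik : ∀ᶠ z in 𝓝 y, ‖gradient d z‖ = c) :
    fderiv ℝ (gradient d) y (gradient d y) = 0 := by
  have hsq := hd.hasFDerivAt_gradient.inner ℝ hd.hasFDerivAt_gradient
  have hconst : (fun z => ⟪gradient d z, gradient d z⟫) =ᶠ[𝓝 y] fun _ => c ^ 2 := by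
    filter_upwards [heik] with z hz
    rw [real_inner_self_eq_norm_sq, hz]
  have horth : ∀ u, ⟪gradient d y, fderiv ℝ (gradient d) y u⟫ = 0 := by
    intro u
    have h := congrArg (· u)
      (hsq.fderiv.symm.trans (hconst.fderiv_eq.trans (fderiv_const_apply _)))
    simp only [ContinuousLinearMap.coe_comp, Function.comp_apply,
      ContinuousLinearMap.prod_apply, fderivInnerCLM_apply, zero_apply,
      real_inner_comm (gradient d y)] at h
    linarith
  rw [← inner_self_eq_zero (𝕜 := ℝ), hd.inner_fderiv_gradient_comm, real_inner_comm, horth]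

theorem sub_eq_inner_of_hasGradientAt_segment {v x y : F}
    (h : ∀ z ∈ segment ℝ x y, HasGradientAt d v z) : d y - d x = ⟪v, y - x⟫ := by
  have hflat : ∀ z ∈ segment ℝ x y,
      HasFDerivWithinAt (fun z => d z - ⟪v, z⟫) (0 : F →L[ℝ] ℝ) (segment ℝ x y) z := by
    intro z hz
    have := (h z hz).hasFDerivAt.sub (innerSL ℝ v).hasFDerivAt
    rw [show toDual ℝ F v - innerSL ℝ v = 0 from sub_self _] at this
    exact this.hasFDerivWithinAt
  have := (convex_segment x y).norm_image_sub_le_of_norm_hasFDerivWithin_le hflat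
    (fun _ _ => le_of_eq norm_zero) (left_mem_segment ℝ x y) (right_mem_segment ℝ x y)
  rw [zero_mul, norm_le_zero_iff] at this
  rw [inner_sub_right]
  linarith

theorem Convex.lipschitzOnWith_of_nnnorm_gradient_le {U : Set F} {C : ℝ≥0} (hU : Convex ℝ U)
    (hd : ∀ z ∈ U, DifferentiableAt ℝ d z) (bound : ∀ z ∈ U, ‖gradient d z‖₊ ≤ C) :
    LipschitzOnWith C d U :=
  lipschitzOnWith_of_nnnorm_fderiv_le hd (fun z hz => by
    rw [(hd z hz).hasGradientAt.hasFDerivAt.fderiv, LinearIsometryEquiv.nnnorm_map]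
    exact bound z hz) hU

end InnerProductSpace

/-- Along `t ↦ x + t s g(x)` the defect `g - g(x)` obeys a linear ODE with zero initial value,
since `G y (g y) = 0`; Grönwall's inequality forces it to vanish. -/
theorem eqOn_segment_of_fderiv_apply_self_eq_zero {E : Type*} [NormedAddCommGroup E]
    [NormedSpace ℝ E] {g : E → E} {G : E → E →L[ℝ] E} {U : Set E}
    (hg : ∀ y ∈ U, HasFDerivAt g (G y) y) (hG : ContinuousOn G U)
    (hker : ∀ y ∈ U, G y (g y) = 0) {x : E} {s : ℝ}
    (hU : segment ℝ x (x + s • g x) ⊆ U) :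
    ∀ y ∈ segment ℝ x (x + s • g x), g y = g x := by
  set γ : ℝ → E := fun t => x + t • (s • g x)
  have hseg : segment ℝ x (x + s • g x) = γ '' Icc 0 1 := by
    rw [segment_eq_image', add_sub_cancel_left]
  have hγU : ∀ t ∈ Icc (0 : ℝ) 1, γ t ∈ U := fun t ht =>
    hU (hseg ▸ mem_image_of_mem γ ht)
  have hγ : ∀ t, HasDerivAt γ (s • g x) t := fun t => by
    simpa [γ] using ((hasDerivAt_id t).smul_const (s • g x)).const_add x
  obtain ⟨M, hM⟩ : ∃ M, ∀ y ∈ segment ℝ x (x + s • g x), ‖G y‖ ≤ M :=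
    (hseg ▸ isCompact_Icc.image (by fun_prop)).exists_bound_of_continuousOn (hG.mono hU)
  have hderiv : ∀ t ∈ Icc (0 : ℝ) 1,
      HasDerivAt (fun t => g (γ t) - g x) (G (γ t) (s • g x)) t := fun t ht =>
    ((hg _ (hγU t ht)).comp_hasDerivAt t (hγ t)).sub_const (g x)
  have hdefect : ∀ t ∈ Icc (0 : ℝ) 1, g (γ t) - g x = 0 := by
    refine eq_zero_of_abs_deriv_le_mul_abs_self_of_eq_zero_right (K := |s| * M)
      (fun t ht => (hderiv t ht).continuousAt.continuousWithinAt)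
      (fun t ht => (hderiv t (Ico_subset_Icc_self ht)).hasDerivWithinAt) (by simp [γ]) ?_
    intro t ht
    have hγt := hγU t (Ico_subset_Icc_self ht)
    have hM' : ‖G (γ t)‖ ≤ M :=
      hM _ (hseg ▸ mem_image_of_mem γ (Ico_subset_Icc_self ht))
    calc ‖G (γ t) (s • g x)‖ = |s| * ‖G (γ t) (g (γ t) - g x)‖ := by
          rw [map_smul, norm_smul, map_sub, hker _ hγt, zero_sub, norm_neg, Real.norm_eq_abs]
      _ ≤ |s| * (M * ‖g (γ t) - g x‖) := by
          gcongr; exact (G (γ t)).le_of_opNorm_le hM' _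
      _ = |s| * M * ‖g (γ t) - g x‖ := by ring
  rw [hseg]
  rintro _ ⟨t, ht, rfl⟩
  exact sub_eq_zero.mp (hdefect t ht)

theorem LipschitzOnWith.infDist_eq_abs {X : Type*} [PseudoMetricSpace X] {d : X → ℝ}
    {U : Set X} (hd : LipschitzOnWith 1 d U) {x p : X} (hx : x ∈ U) (hp : p ∈ U)
    (hp0 : d p = 0) (hxp : dist x p = |d x|) :
    infDist x {y | y ∈ U ∧ d y = 0} = |d x| := by
  have hne : {y | y ∈ U ∧ d y = 0}.Nonempty := ⟨p, hp, hp0⟩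
  refine le_antisymm (hxp ▸ infDist_le_dist_of_mem ⟨hp, hp0⟩)
    ((le_infDist hne).2 fun y ⟨hy, hy0⟩ => ?_)
  simpa [hy0, Real.dist_eq] using hd.dist_le_mul x hx y hy

/-- Let `U ⊆ ℝ³` be open and convex and `d : U → ℝ` a `C²` function satisfying the eikonal
equation `‖∇d(x)‖ = 1` on `U`.  If `x ∈ U` is such that `π(x) := x − d(x)∇d(x) ∈ U`, then
`d(π(x)) = 0`, `‖x − π(x)‖ = |d(x)|`, and `|d(x)| = dist(x, {y ∈ U : d(y) = 0})`;
that is, `π(x)` is a closest point to `x` on the zero level set of `d` within `U` and `|d(x)|`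
equals the distance from `x` to that zero level set. -/
theorem stmt_12 (U : Set E3) (hU : IsOpen U) (hconv : Convex ℝ U) (d : E3 → ℝ)
    (hd : ContDiffOn ℝ 2 d U) (heik : ∀ x ∈ U, ‖gradient d x‖ = 1)
    (x : E3) (hx : x ∈ U) (hπ : x - d x • gradient d x ∈ U) :
    d (x - d x • gradient d x) = 0 ∧
    ‖x - (x - d x • gradient d x)‖ = |d x| ∧
    |d x| = Metric.infDist x {y | y ∈ U ∧ d y = 0} := by
  have hC2 : ∀ y ∈ U, ContDiffAt ℝ 2 d y := fun y hy => hd.contDiffAt (hU.mem_nhds hy)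
  have hdiff : ∀ y ∈ U, DifferentiableAt ℝ d y := fun y hy =>
    (hC2 y hy).differentiableAt two_ne_zero
  have hHess : ContinuousOn (fderiv ℝ (gradient d)) U :=
    ContDiffOn.continuousOn_fderiv_of_isOpen
      (fun y hy => (hC2 y hy).contDiffAt_gradient.contDiffWithinAt) hU le_rfl
  have hker : ∀ y ∈ U, fderiv ℝ (gradient d) y (gradient d y) = 0 := fun y hy =>
    (hC2 y hy).fderiv_gradient_apply_gradient_eq_zero
      (Filter.eventually_of_mem (hU.mem_nhds hy) heik)
  have hπ' : x - d x • gradient d x = x + (-d x) • gradient d x := by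
    rw [neg_smul, sub_eq_add_neg]
  rw [hπ'] at hπ ⊢
  have hseg := hconv.segment_subset hx hπ
  have hconst := eqOn_segment_of_fderiv_apply_self_eq_zero
    (fun y hy => (hC2 y hy).hasFDerivAt_gradient) hHess hker hseg
  have hdπ : d (x + (-d x) • gradient d x) = 0 := by
    have := sub_eq_inner_of_hasGradientAt_segment fun z hz =>
      hconst z hz ▸ (hdiff z (hseg hz)).hasGradientAt
    rw [add_sub_cancel_left, real_inner_smul_right, real_inner_self_eq_norm_sq,
      heik x hx] at this
    linarith
  have hnorm : ‖x - (x + (-d x) • gradient d x)‖ = |d x| := by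
    rw [sub_add_cancel_left, norm_neg, norm_smul, heik x hx, Real.norm_eq_abs, abs_neg, mul_one]
  have hlip : LipschitzOnWith 1 d U := hconv.lipschitzOnWith_of_nnnorm_gradient_le hdiff
    fun z hz => by rw [← NNReal.coe_le_coe, coe_nnnorm, heik z hz, NNReal.coe_one]
  exact ⟨hdπ, hnorm, (hlip.infDist_eq_abs hx hπ hdπ (by rw [dist_eq_norm, hnorm])).symm⟩
end
end
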